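/- arXiv:2304.13526 — 15 statements merged into one kernel-verified Lean document; each statement's English description precedes it below -/
import Mathlib

section
/- Let R be a commutative ring, δ an expansion function on R, t a positive integer, and Q a t-absorbing δ-semiprimary ideal of R such that rad(δ(Q)) ⊆ δ(rad(Q)). Then rad(Q) is a t-absorbing δ-semiprimary ideal of R. -/
/-- An expansion function on the ideals of a commutative ring `R`:
`I ⊆ δ(I)` for every ideal `I`, and `δ(I) ⊆ δ(J)` whenever `I ⊆ J`. -/
def IdealExpansion {R : Type*} [CommRing R] (δ : Ideal R → Ideal R) : Prop :=
  (∀ I : Ideal R, I ≤ δ I) ∧ ∀ I J : Ideal R, I ≤ J → δ I ≤ δ J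

/-- A proper ideal `Q` is `t`-absorbing `δ`-semiprimary if whenever a product of `t + 1`
elements lies in `Q`, some product of `t` of them lies in `δ Q`. -/
def IsTAbsorbingDeltaSemiprimary {R : Type*} [CommRing R] (δ : Ideal R → Ideal R)
    (t : ℕ) (Q : Ideal R) : Prop :=
  Q ≠ ⊤ ∧ ∀ a : Fin (t + 1) → R, (∏ i, a i) ∈ Q →
    ∃ j : Fin (t + 1), (∏ i ∈ Finset.univ.erase j, a i) ∈ δ Q

/-- A proper ideal `Q` is weakly `t`-absorbing `δ`-semiprimary if whenever a nonzero product
of `t + 1` elements lies in `Q`, some product of `t` of them lies in `δ Q`. -/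
def IsWeaklyTAbsorbingDeltaSemiprimary {R : Type*} [CommRing R] (δ : Ideal R → Ideal R)
    (t : ℕ) (Q : Ideal R) : Prop :=
  Q ≠ ⊤ ∧ ∀ a : Fin (t + 1) → R, (∏ i, a i) ≠ 0 → (∏ i, a i) ∈ Q →
    ∃ j : Fin (t + 1), (∏ i ∈ Finset.univ.erase j, a i) ∈ δ Q

/-- A proper ideal `Q` is a `t`-absorbing ideal if whenever a product of `t + 1` elements
lies in `Q`, some product of `t` of them lies in `Q`. -/
def IsTAbsorbingIdeal {R : Type*} [CommRing R] (t : ℕ) (Q : Ideal R) : Prop :=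
  Q ≠ ⊤ ∧ ∀ a : Fin (t + 1) → R, (∏ i, a i) ∈ Q →
    ∃ j : Fin (t + 1), (∏ i ∈ Finset.univ.erase j, a i) ∈ Q

/-- A proper ideal `Q` is a weakly `t`-absorbing ideal if whenever a nonzero product of
`t + 1` elements lies in `Q`, some product of `t` of them lies in `Q`. -/
def IsWeaklyTAbsorbingIdeal {R : Type*} [CommRing R] (t : ℕ) (Q : Ideal R) : Prop :=
  Q ≠ ⊤ ∧ ∀ a : Fin (t + 1) → R, (∏ i, a i) ≠ 0 → (∏ i, a i) ∈ Q →
    ∃ j : Fin (t + 1), (∏ i ∈ Finset.univ.erase j, a i) ∈ Q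

/-- Triple form: a proper ideal `Q` is 2-absorbing `δ`-semiprimary. -/
def Is2AbsorbingDeltaSemiprimary {R : Type*} [CommRing R] (δ : Ideal R → Ideal R)
    (Q : Ideal R) : Prop :=
  Q ≠ ⊤ ∧ ∀ a b c : R, a * b * c ∈ Q →
    a * b ∈ δ Q ∨ b * c ∈ δ Q ∨ a * c ∈ δ Q

/-- Triple form: a proper ideal `Q` is weakly 2-absorbing `δ`-semiprimary. -/
def IsWeakly2AbsorbingDeltaSemiprimary {R : Type*} [CommRing R] (δ : Ideal R → Ideal R)
    (Q : Ideal R) : Prop :=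
  Q ≠ ⊤ ∧ ∀ a b c : R, a * b * c ≠ 0 → a * b * c ∈ Q →
    a * b ∈ δ Q ∨ b * c ∈ δ Q ∨ a * c ∈ δ Q

/-- `(x, y, z)` is a `δ`-triple-zero of `Q`. -/
def IsDeltaTripleZero {R : Type*} [CommRing R] (δ : Ideal R → Ideal R) (Q : Ideal R)
    (x y z : R) : Prop :=
  x * y * z = 0 ∧ x * y ∉ δ Q ∧ y * z ∉ δ Q ∧ x * z ∉ δ Q

/-- `(a 0, …, a t)` is a `δ`-`t`-zero of `Q`: the full product is zero and no
product of `t` of the entries lies in `δ Q`. -/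
def IsDeltaTZero {R : Type*} [CommRing R] (δ : Ideal R → Ideal R) (Q : Ideal R)
    (t : ℕ) (a : Fin (t + 1) → R) : Prop :=
  (∏ i, a i) = 0 ∧ ∀ j : Fin (t + 1), (∏ i ∈ Finset.univ.erase j, a i) ∉ δ Q

theorem radical_isTAbsorbingDeltaSemiprimary {R : Type*} [CommRing R]
    (δ : Ideal R → Ideal R) (hδ : IdealExpansion δ) (t : ℕ) (ht : 0 < t) (Q : Ideal R)
    (hQ : IsTAbsorbingDeltaSemiprimary δ t Q)
    (hrad : (δ Q).radical ≤ δ Q.radical) :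
    IsTAbsorbingDeltaSemiprimary δ t Q.radical := by
  obtain ⟨hQtop, hQabs⟩ := hQ
  constructor
  · intro h
    exact hQtop (Ideal.radical_eq_top.mp h)
  · intro a ha
    obtain ⟨n, hn⟩ := Ideal.mem_radical_iff.mp ha
    have hprod : (∏ i, (a i) ^ n) ∈ Q := by
      rwa [Finset.prod_pow]
    obtain ⟨j, hj⟩ := hQabs (fun i => (a i) ^ n) hprod
    refine ⟨j, hrad ?_⟩
    rw [Ideal.mem_radical_iff]
    exact ⟨n, by rwa [← Finset.prod_pow]⟩
end

section
/- Let R be a commutative ring, t a positive integer, and Q a t-absorbing δ₁-semiprimary ideal of R, where δ₁ is the expansion function sending each ideal I to its radical rad(I). Then rad(Q) is a t-absorbing ideal of R. -/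
theorem radical_isTAbsorbing_of_delta_one {R : Type*} [CommRing R]
    (t : ℕ) (ht : 0 < t) (Q : Ideal R)
    (hQ : IsTAbsorbingDeltaSemiprimary (fun I : Ideal R => I.radical) t Q) :
    IsTAbsorbingIdeal t Q.radical := by
  obtain ⟨hQne, hQabs⟩ := hQ
  refine ⟨fun h => hQne (Ideal.radical_eq_top.mp h), fun a hmem => ?_⟩
  obtain ⟨n, hn⟩ := hmem
  rw [← Finset.prod_pow] at hn
  obtain ⟨j, hj⟩ := hQabs (fun i => a i ^ n) hn
  refine ⟨j, ?_⟩
  rw [Finset.prod_pow] at hj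
  exact Ideal.mem_radical_of_pow_mem hj
end

section
/- Let R be a commutative ring, δ an expansion function on R, and t a positive integer. Every proper ideal of R is a t-absorbing δ-semiprimary ideal if and only if every proper principal ideal of R is a t-absorbing δ-semiprimary ideal. -/
theorem forall_isTAbsorbingDeltaSemiprimary_iff_principal {R : Type*} [CommRing R]
    (δ : Ideal R → Ideal R) (hδ : IdealExpansion δ) (t : ℕ) (ht : 0 < t) :
    (∀ Q : Ideal R, Q ≠ ⊤ → IsTAbsorbingDeltaSemiprimary δ t Q) ↔
      (∀ Q : Ideal R, Q ≠ ⊤ → Q.IsPrincipal → IsTAbsorbingDeltaSemiprimary δ t Q) := by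
  constructor
  · intro h Q hQ _; exact h Q hQ
  · intro h Q hQ
    refine ⟨hQ, fun a ha => ?_⟩
    set p := ∏ i, a i with hp
    have hspan : Ideal.span {p} ≤ Q := (Ideal.span_singleton_le_iff_mem Q).mpr ha
    have hne : Ideal.span {p} ≠ ⊤ := fun htop => hQ (top_le_iff.mp (htop ▸ hspan))
    obtain ⟨-, h2⟩ := h (Ideal.span {p}) hne ⟨⟨p, rfl⟩⟩
    obtain ⟨j, hj⟩ := h2 a (Ideal.mem_span_singleton_self p)
    exact ⟨j, hδ.2 _ _ hspan hj⟩
end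

section
/- Let R be a commutative ring, t a positive integer, and δ an intersection-preserving expansion function on R, i.e. δ(I ∩ J) = δ(I) ∩ δ(J) for all ideals I, J of R. Let Q₁, …, Q_s (s ≥ 1) be t-absorbing δ-semiprimary ideals of R such that δ(Qᵢ) = P for every 1 ≤ i ≤ s, for a fixed ideal P. Then Q = Q₁ ∩ ⋯ ∩ Q_s is a t-absorbing δ-semiprimary ideal of R with δ(Q) = P. -/
lemma delta_finset_inf {R : Type*} [CommRing R] (δ : Ideal R → Ideal R)
    (hint : ∀ I J : Ideal R, δ (I ⊓ J) = δ I ⊓ δ J) {ι : Type*}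
    (s : Finset ι) (hs : s.Nonempty) (f : ι → Ideal R) :
    δ (s.inf f) = s.inf (fun i => δ (f i)) := by
  induction hs using Finset.Nonempty.cons_induction with
  | singleton a => simp
  | cons a s ha hs ih => simp [Finset.inf_cons, hint, ih]

theorem iInf_isTAbsorbingDeltaSemiprimary {R : Type*} [CommRing R]
    (δ : Ideal R → Ideal R) (hδ : IdealExpansion δ)
    (hint : ∀ I J : Ideal R, δ (I ⊓ J) = δ I ⊓ δ J)
    (t : ℕ) (ht : 0 < t) (s : ℕ) (hs : 0 < s)
    (Q : Fin s → Ideal R) (P : Ideal R)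
    (hQ : ∀ i, IsTAbsorbingDeltaSemiprimary δ t (Q i))
    (hP : ∀ i, δ (Q i) = P) :
    IsTAbsorbingDeltaSemiprimary δ t (⨅ i, Q i) ∧ δ (⨅ i, Q i) = P := by
  have hne : (Finset.univ : Finset (Fin s)).Nonempty := by
    haveI : NeZero s := ⟨hs.ne'⟩
    exact Finset.univ_nonempty
  have key : δ (⨅ i, Q i) = P := by
    have h1 : (⨅ i, Q i) = Finset.univ.inf Q := by
      simp [Finset.inf_eq_iInf]
    rw [h1, delta_finset_inf δ hint _ hne]
    have : (fun i => δ (Q i)) = fun _ => P := funext hP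
    rw [this, Finset.inf_const hne]
  refine ⟨⟨?_, ?_⟩, key⟩
  · intro h
    exact (hQ ⟨0, hs⟩).1 (top_le_iff.mp (h ▸ iInf_le _ _))
  · intro a hmem
    obtain ⟨j, hj⟩ := (hQ ⟨0, hs⟩).2 a (iInf_le Q ⟨0, hs⟩ hmem)
    exact ⟨j, by rw [key, ← hP ⟨0, hs⟩]; exact hj⟩
end

section
/- Let R₁ and R₂ be commutative rings, δ₁ and δ₂ expansion functions on R₁ and R₂ respectively, and δ an expansion function on R₁ × R₂ satisfying δ(I₁ × I₂) = δ₁(I₁) × δ₂(I₂) for all ideals I₁ of R₁ and I₂ of R₂. Let t be a positive integer. If Q = Q₁ × Q₂ is a (t+1)-absorbing δ-semiprimary ideal of R₁ × R₂, then either Q₁ is a (t+1)-absorbing δ₁-semiprimary ideal of R₁ and δ₂(Q₂) = R₂, or Q₂ is a (t+1)-absorbing δ₂-semiprimary ideal of R₂ and δ₁(Q₁) = R₁, or Q₁ is a t-absorbing δ₁-semiprimary ideal of R₁ and Q₂ is a t-absorbing δ₂-semiprimary ideal of R₂. -/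
private lemma last_not_mem_map' {n : ℕ} :
    Fin.last n ∉ Finset.map Fin.castSuccEmb (Finset.univ : Finset (Fin n)) := by
  simp only [Finset.mem_map]
  rintro ⟨x, -, hx⟩
  exact (Fin.castSucc_lt_last x).ne hx

private lemma prod_erase_last' {M : Type*} [CommMonoid M] {n : ℕ} (f : Fin (n+1) → M) :
    ∏ i ∈ Finset.univ.erase (Fin.last n), f i = ∏ i : Fin n, f i.castSucc := by
  rw [Fin.univ_castSuccEmb, Finset.cons_eq_insert,
    Finset.erase_insert last_not_mem_map', Finset.prod_map]
  rfl

private lemma prod_erase_castSucc' {M : Type*} [CommMonoid M] {n : ℕ} (f : Fin (n+1) → M)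
    (k : Fin n) :
    ∏ i ∈ Finset.univ.erase (Fin.castSucc k), f i
      = (∏ i ∈ Finset.univ.erase k, f i.castSucc) * f (Fin.last n) := by
  rw [Fin.univ_castSuccEmb, Finset.cons_eq_insert,
    Finset.erase_insert_of_ne (Fin.castSucc_lt_last k).ne',
    Finset.prod_insert (fun h => last_not_mem_map' (Finset.erase_subset _ _ h)),
    show k.castSucc = Fin.castSuccEmb k from rfl,
    ← Finset.map_erase, Finset.prod_map, mul_comm]
  rfl

theorem prod_isTAbsorbingDeltaSemiprimary {R₁ R₂ : Type*} [CommRing R₁] [CommRing R₂]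
    (δ₁ : Ideal R₁ → Ideal R₁) (δ₂ : Ideal R₂ → Ideal R₂)
    (δ : Ideal (R₁ × R₂) → Ideal (R₁ × R₂))
    (hδ₁ : IdealExpansion δ₁) (hδ₂ : IdealExpansion δ₂) (hδ : IdealExpansion δ)
    (hprod : ∀ (I₁ : Ideal R₁) (I₂ : Ideal R₂), δ (I₁.prod I₂) = (δ₁ I₁).prod (δ₂ I₂))
    (t : ℕ) (ht : 0 < t) (Q₁ : Ideal R₁) (Q₂ : Ideal R₂)
    (hQ : IsTAbsorbingDeltaSemiprimary δ (t + 1) (Q₁.prod Q₂)) :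
    (IsTAbsorbingDeltaSemiprimary δ₁ (t + 1) Q₁ ∧ δ₂ Q₂ = ⊤) ∨
      (IsTAbsorbingDeltaSemiprimary δ₂ (t + 1) Q₂ ∧ δ₁ Q₁ = ⊤) ∨
      (IsTAbsorbingDeltaSemiprimary δ₁ t Q₁ ∧ IsTAbsorbingDeltaSemiprimary δ₂ t Q₂) := by
  obtain ⟨hQtop, hQabs⟩ := hQ
  have memp : ∀ (I : Ideal R₁) (J : Ideal R₂) (x : R₁ × R₂),
      x ∈ I.prod J ↔ x.1 ∈ I ∧ x.2 ∈ J := fun _ _ _ => Iff.rfl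
  -- If `Q₁` is proper, then `Q₁` is `(t+1)`-absorbing `δ₁`-semiprimary.
  have claim1 : Q₁ ≠ ⊤ → IsTAbsorbingDeltaSemiprimary δ₁ (t + 1) Q₁ := by
    intro h1
    refine ⟨h1, fun a ha => ?_⟩
    have hmem : (∏ i, ((a i, (0 : R₂)) : R₁ × R₂)) ∈ Q₁.prod Q₂ := by
      rw [← prod_mk_prod, memp]
      exact ⟨ha, by simp⟩
    obtain ⟨j, hj⟩ := hQabs (fun i => (a i, (0 : R₂))) hmem
    refine ⟨j, ?_⟩
    rw [hprod, ← prod_mk_prod] at hj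
    exact ((memp _ _ _).mp hj).1
  have claim1' : Q₂ ≠ ⊤ → IsTAbsorbingDeltaSemiprimary δ₂ (t + 1) Q₂ := by
    intro h2
    refine ⟨h2, fun a ha => ?_⟩
    have hmem : (∏ i, (((0 : R₁), a i) : R₁ × R₂)) ∈ Q₁.prod Q₂ := by
      rw [← prod_mk_prod, memp]
      exact ⟨by simp, ha⟩
    obtain ⟨j, hj⟩ := hQabs (fun i => ((0 : R₁), a i)) hmem
    refine ⟨j, ?_⟩
    rw [hprod, ← prod_mk_prod] at hj
    exact ((memp _ _ _).mp hj).2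
  have claim2 : Q₁ ≠ ⊤ → δ₂ Q₂ ≠ ⊤ → IsTAbsorbingDeltaSemiprimary δ₁ t Q₁ := by
    intro h1 h2
    refine ⟨h1, fun a ha => ?_⟩
    set b₁ : Fin (t + 1 + 1) → R₁ := Fin.snoc a (1 : R₁) with hb₁
    set b₂ : Fin (t + 1 + 1) → R₂ := Fin.snoc (fun _ => (1 : R₂)) (0 : R₂) with hb₂
    have m1 : (∏ i, b₁ i) ∈ Q₁ := by
      rw [Fin.prod_univ_castSucc]
      simp only [hb₁, Fin.snoc_castSucc, Fin.snoc_last, mul_one]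
      exact ha
    have m2 : (∏ i, b₂ i) ∈ Q₂ := by
      rw [Fin.prod_univ_castSucc]
      simp [hb₂]
    have hmem : (∏ i, ((b₁ i, b₂ i) : R₁ × R₂)) ∈ Q₁.prod Q₂ := by
      rw [← prod_mk_prod]
      exact ⟨m1, m2⟩
    obtain ⟨j, hj⟩ := hQabs (fun i => (b₁ i, b₂ i)) hmem
    rw [hprod, ← prod_mk_prod] at hj
    have hj1 : (∏ i ∈ Finset.univ.erase j, b₁ i) ∈ δ₁ Q₁ := ((memp _ _ _).mp hj).1
    have hj2 : (∏ i ∈ Finset.univ.erase j, b₂ i) ∈ δ₂ Q₂ := ((memp _ _ _).mp hj).2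
    rcases Fin.eq_castSucc_or_eq_last j with ⟨k, rfl⟩ | rfl
    · refine ⟨k, ?_⟩
      rw [prod_erase_castSucc'] at hj1
      simpa [hb₁] using hj1
    · exfalso
      apply h2
      rw [prod_erase_last'] at hj2
      simp only [hb₂, Fin.snoc_castSucc, Finset.prod_const_one] at hj2
      exact (Ideal.eq_top_iff_one _).mpr hj2
  have claim2' : Q₂ ≠ ⊤ → δ₁ Q₁ ≠ ⊤ → IsTAbsorbingDeltaSemiprimary δ₂ t Q₂ := by
    intro h2 h1
    refine ⟨h2, fun a ha => ?_⟩
    set b₁ : Fin (t + 1 + 1) → R₁ := Fin.snoc (fun _ => (1 : R₁)) (0 : R₁) with hb₁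
    set b₂ : Fin (t + 1 + 1) → R₂ := Fin.snoc a (1 : R₂) with hb₂
    have m1 : (∏ i, b₁ i) ∈ Q₁ := by
      rw [Fin.prod_univ_castSucc]
      simp [hb₁]
    have m2 : (∏ i, b₂ i) ∈ Q₂ := by
      rw [Fin.prod_univ_castSucc]
      simp only [hb₂, Fin.snoc_castSucc, Fin.snoc_last, mul_one]
      exact ha
    have hmem : (∏ i, ((b₁ i, b₂ i) : R₁ × R₂)) ∈ Q₁.prod Q₂ := by
      rw [← prod_mk_prod]
      exact ⟨m1, m2⟩
    obtain ⟨j, hj⟩ := hQabs (fun i => (b₁ i, b₂ i)) hmem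
    rw [hprod, ← prod_mk_prod] at hj
    have hj1 : (∏ i ∈ Finset.univ.erase j, b₁ i) ∈ δ₁ Q₁ := ((memp _ _ _).mp hj).1
    have hj2 : (∏ i ∈ Finset.univ.erase j, b₂ i) ∈ δ₂ Q₂ := ((memp _ _ _).mp hj).2
    rcases Fin.eq_castSucc_or_eq_last j with ⟨k, rfl⟩ | rfl
    · refine ⟨k, ?_⟩
      rw [prod_erase_castSucc'] at hj2
      simpa [hb₂] using hj2
    · exfalso
      apply h1
      rw [prod_erase_last'] at hj1
      simp only [hb₁, Fin.snoc_castSucc, Finset.prod_const_one] at hj1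
      exact (Ideal.eq_top_iff_one _).mpr hj1
  by_cases h2 : Q₂ = ⊤
  · have h1 : Q₁ ≠ ⊤ := fun h => hQtop (by rw [h, h2, Ideal.prod_top_top])
    exact Or.inl ⟨claim1 h1, top_le_iff.mp (h2 ▸ hδ₂.1 Q₂)⟩
  by_cases h1 : Q₁ = ⊤
  · exact Or.inr (Or.inl ⟨claim1' h2, top_le_iff.mp (h1 ▸ hδ₁.1 Q₁)⟩)
  by_cases e2 : δ₂ Q₂ = ⊤
  · exact Or.inl ⟨claim1 h1, e2⟩
  by_cases e1 : δ₁ Q₁ = ⊤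
  · exact Or.inr (Or.inl ⟨claim1' h2, e1⟩)
  · exact Or.inr (Or.inr ⟨claim2 h1 e2, claim2' h2 e1⟩)
end

section
/- Let R be a commutative ring, δ an expansion function on R, t a positive integer, Q a (weakly) t-absorbing δ-semiprimary ideal of R, and P a proper ideal of R with P ⊆ Q. If δ(P) = δ(Q), then P is a (weakly) t-absorbing δ-semiprimary ideal of R. -/
theorem isTAbsorbingDeltaSemiprimary_of_subset {R : Type*} [CommRing R]
    (δ : Ideal R → Ideal R) (hδ : IdealExpansion δ) (t : ℕ) (ht : 0 < t)
    (Q P : Ideal R) (hP : P ≠ ⊤) (hPQ : P ≤ Q) (heq : δ P = δ Q) :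
    (IsTAbsorbingDeltaSemiprimary δ t Q → IsTAbsorbingDeltaSemiprimary δ t P) ∧
      (IsWeaklyTAbsorbingDeltaSemiprimary δ t Q →
        IsWeaklyTAbsorbingDeltaSemiprimary δ t P) := by
  constructor
  · rintro ⟨-, hQ⟩
    refine ⟨hP, fun a ha => ?_⟩
    obtain ⟨j, hj⟩ := hQ a (hPQ ha)
    exact ⟨j, heq ▸ hj⟩
  · rintro ⟨-, hQ⟩
    refine ⟨hP, fun a hne ha => ?_⟩
    obtain ⟨j, hj⟩ := hQ a hne (hPQ ha)
    exact ⟨j, heq ▸ hj⟩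
end

section
/- Let R be a commutative ring, δ an expansion function on R, Q a weakly 2-absorbing δ-semiprimary ideal of R, I an ideal of R, and x, y ∈ R such that qxy ∈ Q for every q ∈ I. If (q, x, y) is not a δ-triple-zero of Q for any q ∈ I and xy ∉ δ(Q), then either qx ∈ δ(Q) for all q ∈ I, or qy ∈ δ(Q) for all q ∈ I. -/
theorem weakly2Abs_ideal_mul_mem {R : Type*} [CommRing R]
    (δ : Ideal R → Ideal R) (hδ : IdealExpansion δ)
    (Q I : Ideal R) (x y : R)
    (hQ : IsWeakly2AbsorbingDeltaSemiprimary δ Q)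
    (hmem : ∀ q ∈ I, q * x * y ∈ Q)
    (hz : ∀ q ∈ I, ¬ IsDeltaTripleZero δ Q q x y)
    (hxy : x * y ∉ δ Q) :
    (∀ q ∈ I, q * x ∈ δ Q) ∨ (∀ q ∈ I, q * y ∈ δ Q) := by
  have key : ∀ q ∈ I, q * x ∈ δ Q ∨ q * y ∈ δ Q := by
    intro q hq
    by_cases h0 : q * x * y = 0
    · have := hz q hq
      unfold IsDeltaTripleZero at this
      push_neg at this
      by_cases hqx : q * x ∈ δ Q
      · exact Or.inl hqx
      · exact Or.inr (this h0 hqx hxy)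
    · rcases hQ.2 q x y h0 (hmem q hq) with h | h | h
      · exact Or.inl h
      · exact absurd h hxy
      · exact Or.inr h
  by_contra hcon
  push_neg at hcon
  obtain ⟨⟨q1, hq1, hq1x⟩, ⟨q2, hq2, hq2y⟩⟩ := hcon
  have h1y : q1 * y ∈ δ Q := (key q1 hq1).resolve_left hq1x
  have h2x : q2 * x ∈ δ Q := (key q2 hq2).resolve_right hq2y
  rcases key (q1 + q2) (I.add_mem hq1 hq2) with h | h
  · rw [add_mul] at h
    exact hq1x (by simpa using (δ Q).sub_mem h h2x)
  · rw [add_mul] at h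
    exact hq2y (by simpa using (δ Q).sub_mem h h1y)
end

section
/- Let R be a commutative ring, δ an expansion function on R, Q a weakly 2-absorbing δ-semiprimary ideal of R, I₁ and I₂ ideals of R, and x ∈ R such that q₁q₂x ∈ Q for all q₁ ∈ I₁ and q₂ ∈ I₂. If (q₁, q₂, x) is not a δ-triple-zero of Q for any q₁ ∈ I₁ and q₂ ∈ I₂, then either qx ∈ δ(Q) for all q ∈ I₁, or qx ∈ δ(Q) for all q ∈ I₂, or q₁q₂ ∈ δ(Q) for all q₁ ∈ I₁ and q₂ ∈ I₂. -/
theorem weakly2Abs_two_ideals_mul_mem {R : Type*} [CommRing R]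
    (δ : Ideal R → Ideal R) (hδ : IdealExpansion δ)
    (Q I₁ I₂ : Ideal R) (x : R)
    (hQ : IsWeakly2AbsorbingDeltaSemiprimary δ Q)
    (hmem : ∀ q₁ ∈ I₁, ∀ q₂ ∈ I₂, q₁ * q₂ * x ∈ Q)
    (hz : ∀ q₁ ∈ I₁, ∀ q₂ ∈ I₂, ¬ IsDeltaTripleZero δ Q q₁ q₂ x) :
    (∀ q ∈ I₁, q * x ∈ δ Q) ∨ (∀ q ∈ I₂, q * x ∈ δ Q) ∨
      (∀ q₁ ∈ I₁, ∀ q₂ ∈ I₂, q₁ * q₂ ∈ δ Q) := by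
  classical
  have P : ∀ q₁ ∈ I₁, ∀ q₂ ∈ I₂,
      q₁ * q₂ ∈ δ Q ∨ q₁ * x ∈ δ Q ∨ q₂ * x ∈ δ Q := by
    intro q₁ h₁ q₂ h₂
    rcases eq_or_ne (q₁ * q₂ * x) 0 with h0 | h0
    · have := hz q₁ h₁ q₂ h₂
      unfold IsDeltaTripleZero at this
      by_contra hc
      push_neg at hc
      exact this ⟨h0, hc.1, hc.2.2, hc.2.1⟩
    · rcases hQ.2 q₁ q₂ x h0 (hmem q₁ h₁ q₂ h₂) with h | h | h
      · exact Or.inl h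
      · exact Or.inr (Or.inr h)
      · exact Or.inr (Or.inl h)
  by_cases hA : ∀ q ∈ I₁, q * x ∈ δ Q
  · exact Or.inl hA
  by_cases hB : ∀ q ∈ I₂, q * x ∈ δ Q
  · exact Or.inr (Or.inl hB)
  push_neg at hA hB
  obtain ⟨a, ha, hax⟩ := hA
  obtain ⟨b, hb, hbx⟩ := hB
  refine Or.inr (Or.inr ?_)
  intro c hc d hd
  have hab : a * b ∈ δ Q := by
    rcases P a ha b hb with h | h | h
    · exact h
    · exact absurd h hax
    · exact absurd h hbx
  by_cases hcx : c * x ∈ δ Q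
  · have h1 : (a + c) * x ∉ δ Q := fun h => hax (by
      have := Ideal.sub_mem _ h hcx
      simpa [add_mul, add_sub_cancel_right] using this)
    by_cases hdx : d * x ∈ δ Q
    · have h2 : (b + d) * x ∉ δ Q := fun h => hbx (by
        have := Ideal.sub_mem _ h hdx
        simpa [add_mul, add_sub_cancel_right] using this)
      have h3 : (a + c) * (b + d) ∈ δ Q := by
        rcases P (a + c) (add_mem ha hc) (b + d) (add_mem hb hd) with h | h | h
        · exact h
        · exact absurd h h1
        · exact absurd h h2
      have had : a * d ∈ δ Q := by
        have h4 : a * (b + d) ∈ δ Q := by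
          rcases P a ha (b + d) (add_mem hb hd) with h | h | h
          · exact h
          · exact absurd h hax
          · exact absurd h h2
        have := Ideal.sub_mem _ h4 hab
        simpa [mul_add, add_sub_cancel_left] using this
      have hcb : c * b ∈ δ Q := by
        have h4 : (a + c) * b ∈ δ Q := by
          rcases P (a + c) (add_mem ha hc) b hb with h | h | h
          · exact h
          · exact absurd h h1
          · exact absurd h hbx
        have := Ideal.sub_mem _ h4 hab
        simpa [add_mul, add_sub_cancel_left] using this
      have : c * d = (a + c) * (b + d) - a * b - a * d - c * b := by ring
      rw [this]
      exact Ideal.sub_mem _ (Ideal.sub_mem _ (Ideal.sub_mem _ h3 hab) had) hcb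
    · have h3 : (a + c) * d ∈ δ Q := by
        rcases P (a + c) (add_mem ha hc) d hd with h | h | h
        · exact h
        · exact absurd h h1
        · exact absurd h hdx
      have had : a * d ∈ δ Q := by
        rcases P a ha d hd with h | h | h
        · exact h
        · exact absurd h hax
        · exact absurd h hdx
      have := Ideal.sub_mem _ h3 had
      simpa [add_mul, add_sub_cancel_left] using this
  · by_cases hdx : d * x ∈ δ Q
    · have h2 : (b + d) * x ∉ δ Q := fun h => hbx (by
        have := Ideal.sub_mem _ h hdx
        simpa [add_mul, add_sub_cancel_right] using this)
      have h3 : c * (b + d) ∈ δ Q := by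
        rcases P c hc (b + d) (add_mem hb hd) with h | h | h
        · exact h
        · exact absurd h hcx
        · exact absurd h h2
      have hcb : c * b ∈ δ Q := by
        rcases P c hc b hb with h | h | h
        · exact h
        · exact absurd h hcx
        · exact absurd h hbx
      have := Ideal.sub_mem _ h3 hcb
      simpa [mul_add, add_sub_cancel_left] using this
    · rcases P c hc d hd with h | h | h
      · exact h
      · exact absurd h hcx
      · exact absurd h hdx
end

section
/- Let R be a commutative ring, δ an expansion function on R, Q a weakly 2-absorbing δ-semiprimary ideal of R, and I₁, I₂, I₃ ideals of R such that the product ideal I₁I₂I₃ is nonzero and I₁I₂I₃ ⊆ Q. If no triple (q₁, q₂, q₃) with q₁ ∈ I₁, q₂ ∈ I₂, q₃ ∈ I₃ is a δ-triple-zero of Q, then I₁I₂ ⊆ δ(Q) or I₂I₃ ⊆ δ(Q) or I₁I₃ ⊆ δ(Q). -/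
theorem weakly2Abs_three_ideals {R : Type*} [CommRing R]
    (δ : Ideal R → Ideal R) (hδ : IdealExpansion δ)
    (Q I₁ I₂ I₃ : Ideal R)
    (hQ : IsWeakly2AbsorbingDeltaSemiprimary δ Q)
    (hne : I₁ * I₂ * I₃ ≠ ⊥) (hsub : I₁ * I₂ * I₃ ≤ Q)
    (hz : ∀ q₁ ∈ I₁, ∀ q₂ ∈ I₂, ∀ q₃ ∈ I₃, ¬ IsDeltaTripleZero δ Q q₁ q₂ q₃) :
    I₁ * I₂ ≤ δ Q ∨ I₂ * I₃ ≤ δ Q ∨ I₁ * I₃ ≤ δ Q := by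
  classical
  have H : ∀ a ∈ I₁, ∀ b ∈ I₂, ∀ c ∈ I₃,
      a*b ∈ δ Q ∨ b*c ∈ δ Q ∨ a*c ∈ δ Q := by
    intro a ha b hb c hc
    have hmem : a*b*c ∈ Q := hsub (Ideal.mul_mem_mul (Ideal.mul_mem_mul ha hb) hc)
    by_cases h0 : a*b*c = 0
    · by_contra hcon
      push_neg at hcon
      exact hz a ha b hb c hc ⟨h0, hcon.1, hcon.2.1, hcon.2.2⟩
    · exact hQ.2 a b c h0 hmem
  have L1 : ∀ a ∈ I₁, ∀ b ∈ I₂, a*b ∉ δ Q →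
      (∀ c ∈ I₃, b*c ∈ δ Q) ∨ (∀ c ∈ I₃, a*c ∈ δ Q) := by
    intro a ha b hb hab
    by_contra hcon
    push_neg at hcon
    obtain ⟨⟨c₁, hc₁, hbc₁⟩, ⟨c₂, hc₂, hac₂⟩⟩ := hcon
    have h1 : a*c₁ ∈ δ Q := by
      rcases H a ha b hb c₁ hc₁ with h|h|h
      exacts [absurd h hab, absurd h hbc₁, h]
    have h2 : b*c₂ ∈ δ Q := by
      rcases H a ha b hb c₂ hc₂ with h|h|h
      exacts [absurd h hab, h, absurd h hac₂]
    rcases H a ha b hb (c₁+c₂) (add_mem hc₁ hc₂) with h|h|h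
    · exact hab h
    · rw [mul_add] at h
      exact hbc₁ ((Submodule.add_mem_iff_left _ h2).mp h)
    · rw [mul_add] at h
      exact hac₂ ((Submodule.add_mem_iff_right _ h1).mp h)
  have L2 : ∀ a ∈ I₁, ¬ I₂*I₃ ≤ δ Q →
      (∀ b ∈ I₂, a*b ∈ δ Q) ∨ (∀ c ∈ I₃, a*c ∈ δ Q) := by
    intro a ha h23
    by_cases hab2 : ∀ b ∈ I₂, a*b ∈ δ Q
    · exact Or.inl hab2
    push_neg at hab2
    obtain ⟨b₁, hb₁, hab₁⟩ := hab2
    rcases L1 a ha b₁ hb₁ hab₁ with hb₁I₃ | haI₃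
    · right
      rw [Ideal.mul_le] at h23
      push_neg at h23
      obtain ⟨b₂, hb₂, c₂, hc₂, hb₂c₂⟩ := h23
      by_cases hab₂ : a*b₂ ∈ δ Q
      · have h12 : a*(b₁+b₂) ∉ δ Q := by
          rw [mul_add]
          intro h
          exact hab₁ ((Submodule.add_mem_iff_left _ hab₂).mp h)
        rcases L1 a ha (b₁+b₂) (add_mem hb₁ hb₂) h12 with h | h
        · exfalso
          have h' := h c₂ hc₂
          rw [add_mul] at h'
          exact hb₂c₂ ((Submodule.add_mem_iff_right _ (hb₁I₃ c₂ hc₂)).mp h')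
        · exact h
      · rcases L1 a ha b₂ hb₂ hab₂ with h | h
        · exact absurd (h c₂ hc₂) hb₂c₂
        · exact h
    · exact Or.inr haI₃
  by_cases h12 : I₁*I₂ ≤ δ Q
  · exact Or.inl h12
  by_cases h23 : I₂*I₃ ≤ δ Q
  · exact Or.inr (Or.inl h23)
  right; right
  rw [Ideal.mul_le] at h12 ⊢
  push_neg at h12
  obtain ⟨a₁, ha₁, b₀, hb₀, ha₁b₀⟩ := h12
  have ha₁I₃ : ∀ c ∈ I₃, a₁*c ∈ δ Q := by
    rcases L2 a₁ ha₁ h23 with h | h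
    · exact absurd (h b₀ hb₀) ha₁b₀
    · exact h
  intro a ha c hc
  rcases L2 a ha h23 with haI₂ | haI₃
  · have hsum : (a₁+a)*b₀ ∉ δ Q := by
      rw [add_mul]
      intro h
      exact ha₁b₀ ((Submodule.add_mem_iff_left _ (haI₂ b₀ hb₀)).mp h)
    rcases L2 (a₁+a) (add_mem ha₁ ha) h23 with h | h
    · exact absurd (h b₀ hb₀) hsum
    · have h' := h c hc
      rw [add_mul] at h'
      exact (Submodule.add_mem_iff_right _ (ha₁I₃ c hc)).mp h'
  · exact haI₃ c hc
end

section
/- Let R be a commutative ring, δ an expansion function on R, and Q a weakly 2-absorbing δ-semiprimary ideal of R. If (x, y, z) is a δ-triple-zero of Q, then (i) xyq = 0, yzq = 0, and xzq = 0 for every q ∈ Q, and (ii) xq₁q₂ = 0, yq₁q₂ = 0, and zq₁q₂ = 0 for all q₁, q₂ ∈ Q. -/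
theorem deltaTripleZero_annihilates {R : Type*} [CommRing R]
    (δ : Ideal R → Ideal R) (hδ : IdealExpansion δ)
    (Q : Ideal R) (hQ : IsWeakly2AbsorbingDeltaSemiprimary δ Q)
    (x y z : R) (hz : IsDeltaTripleZero δ Q x y z) :
    (∀ q ∈ Q, x * y * q = 0 ∧ y * z * q = 0 ∧ x * z * q = 0) ∧
      (∀ q₁ ∈ Q, ∀ q₂ ∈ Q, x * q₁ * q₂ = 0 ∧ y * q₁ * q₂ = 0 ∧ z * q₁ * q₂ = 0) := by

  obtain ⟨hne, hW⟩ := hQ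
  obtain ⟨hxyz, hxy, hyz, hxz⟩ := hz
  have hsub : Q ≤ δ Q := hδ.1 Q
  have hi : ∀ q ∈ Q, x * y * q = 0 ∧ y * z * q = 0 ∧ x * z * q = 0 := by
    intro q hq
    refine ⟨?_, ?_, ?_⟩
    · by_contra h
      have e : x * y * (z + q) = x * y * q := by rw [mul_add, hxyz, zero_add]
      rcases hW x y (z + q) (by rw [e]; exact h) (by rw [e]; exact Q.mul_mem_left _ hq)
        with h' | h' | h'
      · exact hxy h'
      · exact hyz (by
          have : y * z = y * (z + q) - y * q := by ring
          rw [this]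
          exact Ideal.sub_mem _ h' (hsub (Q.mul_mem_left _ hq)))
      · exact hxz (by
          have : x * z = x * (z + q) - x * q := by ring
          rw [this]
          exact Ideal.sub_mem _ h' (hsub (Q.mul_mem_left _ hq)))
    · by_contra h
      have e : (x + q) * y * z = y * z * q := by
        have : (x + q) * y * z = x * y * z + y * z * q := by ring
        rw [this, hxyz, zero_add]
      rcases hW (x + q) y z (by rw [e]; exact h) (by rw [e]; exact Q.mul_mem_left _ hq)
        with h' | h' | h'
      · exact hxy (by
          have : x * y = (x + q) * y - y * q := by ring
          rw [this]
          exact Ideal.sub_mem _ h' (hsub (Q.mul_mem_left _ hq)))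
      · exact hyz h'
      · exact hxz (by
          have : x * z = (x + q) * z - z * q := by ring
          rw [this]
          exact Ideal.sub_mem _ h' (hsub (Q.mul_mem_left _ hq)))
    · by_contra h
      have e : x * (y + q) * z = x * z * q := by
        have : x * (y + q) * z = x * y * z + x * z * q := by ring
        rw [this, hxyz, zero_add]
      rcases hW x (y + q) z (by rw [e]; exact h) (by rw [e]; exact Q.mul_mem_left _ hq)
        with h' | h' | h'
      · exact hxy (by
          have : x * y = x * (y + q) - x * q := by ring
          rw [this]
          exact Ideal.sub_mem _ h' (hsub (Q.mul_mem_left _ hq)))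
      · exact hyz (by
          have : y * z = (y + q) * z - z * q := by ring
          rw [this]
          exact Ideal.sub_mem _ h' (hsub (Q.mul_mem_left _ hq)))
      · exact hxz h'
  refine ⟨hi, ?_⟩
  intro q₁ hq₁ q₂ hq₂
  have h1 := (hi q₂ hq₂).1  -- x*y*q₂ = 0
  have h2 := (hi q₂ hq₂).2.1 -- y*z*q₂ = 0
  have h3 := (hi q₁ hq₁).2.2 -- x*z*q₁ = 0
  have h4 := (hi q₁ hq₁).1  -- x*y*q₁ = 0
  have h5 := (hi q₁ hq₁).2.1 -- y*z*q₁ = 0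
  have h6 := (hi q₂ hq₂).2.2 -- x*z*q₂ = 0
  refine ⟨?_, ?_, ?_⟩
  · by_contra h
    have e : x * (y + q₁) * (z + q₂) = x * q₁ * q₂ := by
      have : x * (y + q₁) * (z + q₂)
          = x * y * z + x * y * q₂ + x * z * q₁ + x * q₁ * q₂ := by ring
      rw [this, hxyz, h1, h3]; ring
    rcases hW x (y + q₁) (z + q₂) (by rw [e]; exact h)
        (by rw [e]; exact Q.mul_mem_left _ hq₂) with h' | h' | h'
    · exact hxy (by
        have : x * y = x * (y + q₁) - x * q₁ := by ring
        rw [this]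
        exact Ideal.sub_mem _ h' (hsub (Q.mul_mem_left _ hq₁)))
    · exact hyz (by
        have : y * z = (y + q₁) * (z + q₂) - y * q₂ - q₁ * z - q₁ * q₂ := by ring
        rw [this]
        exact Ideal.sub_mem _ (Ideal.sub_mem _ (Ideal.sub_mem _ h'
          (hsub (Q.mul_mem_left _ hq₂))) (hsub (Q.mul_mem_right _ hq₁)))
          (hsub (Q.mul_mem_right _ hq₁)))
    · exact hxz (by
        have : x * z = x * (z + q₂) - x * q₂ := by ring
        rw [this]
        exact Ideal.sub_mem _ h' (hsub (Q.mul_mem_left _ hq₂)))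
  · by_contra h
    have e : (x + q₁) * y * (z + q₂) = y * q₁ * q₂ := by
      have : (x + q₁) * y * (z + q₂)
          = x * y * z + x * y * q₂ + y * z * q₁ + y * q₁ * q₂ := by ring
      rw [this, hxyz, h1, h5]; ring
    rcases hW (x + q₁) y (z + q₂) (by rw [e]; exact h)
        (by rw [e]; exact Q.mul_mem_left _ hq₂) with h' | h' | h'
    · exact hxy (by
        have : x * y = (x + q₁) * y - y * q₁ := by ring
        rw [this]
        exact Ideal.sub_mem _ h' (hsub (Q.mul_mem_left _ hq₁)))
    · exact hyz (by
        have : y * z = y * (z + q₂) - y * q₂ := by ring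
        rw [this]
        exact Ideal.sub_mem _ h' (hsub (Q.mul_mem_left _ hq₂)))
    · exact hxz (by
        have : x * z = (x + q₁) * (z + q₂) - x * q₂ - q₁ * z - q₁ * q₂ := by ring
        rw [this]
        exact Ideal.sub_mem _ (Ideal.sub_mem _ (Ideal.sub_mem _ h'
          (hsub (Q.mul_mem_left _ hq₂))) (hsub (Q.mul_mem_right _ hq₁)))
          (hsub (Q.mul_mem_right _ hq₁)))
  · by_contra h
    have e : (x + q₁) * (y + q₂) * z = z * q₁ * q₂ := by
      have : (x + q₁) * (y + q₂) * z
          = x * y * z + x * z * q₂ + y * z * q₁ + z * q₁ * q₂ := by ring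
      rw [this, hxyz, h6, h5]; ring
    rcases hW (x + q₁) (y + q₂) z (by rw [e]; exact h)
        (by rw [e]; exact Q.mul_mem_left _ hq₂) with h' | h' | h'
    · exact hxy (by
        have : x * y = (x + q₁) * (y + q₂) - x * q₂ - q₁ * y - q₁ * q₂ := by ring
        rw [this]
        exact Ideal.sub_mem _ (Ideal.sub_mem _ (Ideal.sub_mem _ h'
          (hsub (Q.mul_mem_left _ hq₂))) (hsub (Q.mul_mem_right _ hq₁)))
          (hsub (Q.mul_mem_right _ hq₁)))
    · exact hyz (by
        have : y * z = (y + q₂) * z - z * q₂ := by ring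
        rw [this]
        exact Ideal.sub_mem _ h' (hsub (Q.mul_mem_left _ hq₂)))
    · exact hxz (by
        have : x * z = (x + q₁) * z - z * q₁ := by ring
        rw [this]
        exact Ideal.sub_mem _ h' (hsub (Q.mul_mem_left _ hq₁)))
end

section
/- Let R be a commutative ring, δ an expansion function on R, and Q a weakly 2-absorbing δ-semiprimary ideal of R that is not a 2-absorbing δ-semiprimary ideal. Then Q³ = 0, i.e. q₁q₂q₃ = 0 for all q₁, q₂, q₃ ∈ Q. -/
theorem cube_eq_zero_of_weakly2Abs_not_2Abs {R : Type*} [CommRing R]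
    (δ : Ideal R → Ideal R) (hδ : IdealExpansion δ) (Q : Ideal R)
    (hQ : IsWeakly2AbsorbingDeltaSemiprimary δ Q)
    (hn : ¬ Is2AbsorbingDeltaSemiprimary δ Q) :
    ∀ q₁ ∈ Q, ∀ q₂ ∈ Q, ∀ q₃ ∈ Q, q₁ * q₂ * q₃ = 0 := by
  obtain ⟨hQtop, hw⟩ := hQ
  have hle : Q ≤ δ Q := hδ.1 Q
  -- extract a triple zero
  have hex : ∃ a b c : R, IsDeltaTripleZero δ Q a b c := by
    simp only [Is2AbsorbingDeltaSemiprimary, not_and, not_forall] at hn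
    obtain ⟨a, b, c, hno⟩ := hn hQtop
    push_neg at hno
    obtain ⟨habc, h1, h2, h3⟩ := hno
    refine ⟨a, b, c, ?_, h1, h2, h3⟩
    by_contra h0
    rcases hw a b c h0 habc with h | h | h
    · exact h1 h
    · exact h2 h
    · exact h3 h
  obtain ⟨a, b, c, tz⟩ := hex
  have L1 : ∀ x y z : R, IsDeltaTripleZero δ Q x y z → ∀ q ∈ Q, x * y * q = 0 := by
    intro x y z htz q hq
    obtain ⟨h0, hxy, hyz, hxz⟩ := htz
    by_contra hne
    have hkey : x * y * (z + q) = x * y * q := by rw [mul_add, h0, zero_add]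
    have hmem : x * y * (z + q) ∈ Q := by
      rw [hkey]; exact Ideal.mul_mem_left _ _ hq
    have hne' : x * y * (z + q) ≠ 0 := by rw [hkey]; exact hne
    rcases hw x y (z + q) hne' hmem with h | h | h
    · exact hxy h
    · apply hyz
      have e : y * z = y * (z + q) - y * q := by ring
      rw [e]; exact Ideal.sub_mem _ h (hle (Ideal.mul_mem_left _ _ hq))
    · apply hxz
      have e : x * z = x * (z + q) - x * q := by ring
      rw [e]; exact Ideal.sub_mem _ h (hle (Ideal.mul_mem_left _ _ hq))
  have L2 : ∀ x y z : R, IsDeltaTripleZero δ Q x y z →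
      ∀ q₂ ∈ Q, ∀ q₃ ∈ Q, x * q₂ * q₃ = 0 := by
    intro x y z htz q₂ hq₂ q₃ hq₃
    obtain ⟨h0, hxy, hyz, hxz⟩ := htz
    have hxzy : IsDeltaTripleZero δ Q x z y :=
      ⟨by rw [← h0]; ring, hxz, by rw [mul_comm]; exact hyz, hxy⟩
    by_contra hne
    have e1 : x * y * q₃ = 0 := L1 x y z ⟨h0, hxy, hyz, hxz⟩ q₃ hq₃
    have e2 : x * z * q₂ = 0 := L1 x z y hxzy q₂ hq₂
    have key : x * (y + q₂) * (z + q₃) = x * q₂ * q₃ := by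
      linear_combination h0 + e1 + e2
    have hmem : x * (y + q₂) * (z + q₃) ∈ Q := by
      rw [key]; exact Ideal.mul_mem_left _ _ hq₃
    have hne' : x * (y + q₂) * (z + q₃) ≠ 0 := by rw [key]; exact hne
    rcases hw _ _ _ hne' hmem with h | h | h
    · apply hxy
      have e : x * y = x * (y + q₂) - x * q₂ := by ring
      rw [e]; exact Ideal.sub_mem _ h (hle (Ideal.mul_mem_left _ _ hq₂))
    · apply hyz
      have e : y * z = (y + q₂) * (z + q₃) - y * q₃ - q₂ * z - q₂ * q₃ := by ring
      rw [e]
      exact Ideal.sub_mem _ (Ideal.sub_mem _ (Ideal.sub_mem _ h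
        (hle (Ideal.mul_mem_left _ _ hq₃))) (hle (Ideal.mul_mem_right _ _ hq₂)))
        (hle (Ideal.mul_mem_left _ _ hq₃))
    · apply hxz
      have e : x * z = x * (z + q₃) - x * q₃ := by ring
      rw [e]; exact Ideal.sub_mem _ h (hle (Ideal.mul_mem_left _ _ hq₃))
  obtain ⟨h0, hab, hbc, hac⟩ := tz
  have tz' : IsDeltaTripleZero δ Q a b c := ⟨h0, hab, hbc, hac⟩
  have tz_acb : IsDeltaTripleZero δ Q a c b :=
    ⟨by rw [← h0]; ring, hac, by rw [mul_comm]; exact hbc, hab⟩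
  have tz_bca : IsDeltaTripleZero δ Q b c a :=
    ⟨by rw [← h0]; ring, hbc, by rw [mul_comm]; exact hac, by rw [mul_comm]; exact hab⟩
  have tz_bac : IsDeltaTripleZero δ Q b a c :=
    ⟨by rw [← h0]; ring, by rw [mul_comm]; exact hab, hac, hbc⟩
  have tz_cab : IsDeltaTripleZero δ Q c a b :=
    ⟨by rw [← h0]; ring, by rw [mul_comm]; exact hac, hab, by rw [mul_comm]; exact hbc⟩
  intro q₁ hq₁ q₂ hq₂ q₃ hq₃
  by_contra hne
  have e_ab : a * b * q₃ = 0 := L1 a b c tz' q₃ hq₃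
  have e_ac : a * c * q₂ = 0 := L1 a c b tz_acb q₂ hq₂
  have e_bc : b * c * q₁ = 0 := L1 b c a tz_bca q₁ hq₁
  have e_a : a * q₂ * q₃ = 0 := L2 a b c tz' q₂ hq₂ q₃ hq₃
  have e_b : b * q₁ * q₃ = 0 := L2 b a c tz_bac q₁ hq₁ q₃ hq₃
  have e_c : c * q₁ * q₂ = 0 := L2 c a b tz_cab q₁ hq₁ q₂ hq₂
  have key : (a + q₁) * (b + q₂) * (c + q₃) = q₁ * q₂ * q₃ := by
    linear_combination h0 + e_ab + e_ac + e_bc + e_a + e_b + e_c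
  have hmem : (a + q₁) * (b + q₂) * (c + q₃) ∈ Q := by
    rw [key]; exact Ideal.mul_mem_left _ _ hq₃
  have hne' : (a + q₁) * (b + q₂) * (c + q₃) ≠ 0 := by rw [key]; exact hne
  rcases hw _ _ _ hne' hmem with h | h | h
  · apply hab
    have e : a * b = (a + q₁) * (b + q₂) - a * q₂ - q₁ * b - q₁ * q₂ := by ring
    rw [e]
    exact Ideal.sub_mem _ (Ideal.sub_mem _ (Ideal.sub_mem _ h
      (hle (Ideal.mul_mem_left _ _ hq₂))) (hle (Ideal.mul_mem_right _ _ hq₁)))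
      (hle (Ideal.mul_mem_left _ _ hq₂))
  · apply hbc
    have e : b * c = (b + q₂) * (c + q₃) - b * q₃ - q₂ * c - q₂ * q₃ := by ring
    rw [e]
    exact Ideal.sub_mem _ (Ideal.sub_mem _ (Ideal.sub_mem _ h
      (hle (Ideal.mul_mem_left _ _ hq₃))) (hle (Ideal.mul_mem_right _ _ hq₂)))
      (hle (Ideal.mul_mem_left _ _ hq₃))
  · apply hac
    have e : a * c = (a + q₁) * (c + q₃) - a * q₃ - q₁ * c - q₁ * q₃ := by ring
    rw [e]
    exact Ideal.sub_mem _ (Ideal.sub_mem _ (Ideal.sub_mem _ h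
      (hle (Ideal.mul_mem_left _ _ hq₃))) (hle (Ideal.mul_mem_right _ _ hq₁)))
      (hle (Ideal.mul_mem_left _ _ hq₃))
end

section
/- Let R be a commutative ring, δ an expansion function on R, t a positive integer, and Q a weakly t-absorbing δ-semiprimary ideal of R. If (a₁, …, a_{t+1}) is a δ-t-zero of Q, then for every integer s with 1 ≤ s ≤ t, every subset S of {1, …, t+1} with |S| = s, and all elements q₁, …, q_s ∈ Q, one has (∏_{i ∉ S} aᵢ)·q₁⋯q_s = 0. -/
theorem deltaTZero_annihilates {R : Type*} [CommRing R]
    (δ : Ideal R → Ideal R) (hδ : IdealExpansion δ) (t : ℕ) (ht : 0 < t)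
    (Q : Ideal R) (hQ : IsWeaklyTAbsorbingDeltaSemiprimary δ t Q)
    (a : Fin (t + 1) → R) (hz : IsDeltaTZero δ Q t a) :
    ∀ s : ℕ, 1 ≤ s → s ≤ t → ∀ S : Finset (Fin (t + 1)), S.card = s →
      ∀ q : Fin s → R, (∀ i, q i ∈ Q) →
        (∏ i ∈ Sᶜ, a i) * (∏ i, q i) = 0 := by
  obtain ⟨hprod, hnot⟩ := hz
  suffices H : ∀ s : ℕ, 1 ≤ s → s ≤ t → ∀ S : Finset (Fin (t + 1)), S.card = s →
      ∀ c : Fin (t + 1) → R, (∀ i ∈ S, c i ∈ Q) →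
        (∏ i ∈ Sᶜ, a i) * (∏ i ∈ S, c i) = 0 by
    intro s hs1 hst S hS q hq
    set e := S.orderIsoOfFin hS with he
    set c : Fin (t + 1) → R := fun i => if h : i ∈ S then q (e.symm ⟨i, h⟩) else 0 with hc
    have hcm : ∀ i ∈ S, c i ∈ Q := by
      intro i hi
      simp only [hc, dif_pos hi]
      exact hq _
    have hpc : ∏ i ∈ S, c i = ∏ j, q j := by
      rw [← Finset.prod_coe_sort S c, ← Equiv.prod_comp e.toEquiv (fun x => c x.1)]
      refine Finset.prod_congr rfl fun j _ => ?_
      have hmem : ((e.toEquiv j : S) : Fin (t + 1)) ∈ S := (e.toEquiv j).2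
      simp only [hc]
      rw [dif_pos hmem]
      have : (⟨((e.toEquiv j : S) : Fin (t + 1)), hmem⟩ : S) = e.toEquiv j := rfl
      rw [this]
      simp
    rw [← hpc]
    exact H s hs1 hst S hS c hcm
  intro s
  induction s using Nat.strong_induction_on with
  | _ s IH =>
    intro hs1 hst S hS c hc
    by_contra hx
    set d : Fin (t + 1) → R := fun i => if i ∈ S then c i else 0 with hd
    set b : Fin (t + 1) → R := fun i => a i + d i with hb
    have hdS : ∀ U : Finset (Fin (t + 1)), U ⊆ S → ∏ i ∈ U, d i = ∏ i ∈ U, c i :=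
      fun U hU => Finset.prod_congr rfl fun i hi => by simp [hd, hU hi]
    have hdout : ∀ U : Finset (Fin (t + 1)), ¬ U ⊆ S → ∏ i ∈ U, d i = 0 := by
      intro U hU
      obtain ⟨i, hiU, hiS⟩ := Finset.not_subset.mp hU
      exact Finset.prod_eq_zero hiU (by simp [hd, hiS])
    have hSne : S.Nonempty := Finset.card_pos.mp (hS ▸ hs1)
    have hcQ : ∀ U : Finset (Fin (t + 1)), U ⊆ S → U.Nonempty → ∏ i ∈ U, c i ∈ Q := by
      intro U hU ⟨j, hj⟩
      rw [← Finset.mul_prod_erase U c hj]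
      exact Q.mul_mem_right _ (hc j (hU hj))
    -- the main product of the perturbed tuple
    have hPB : ∏ i, b i = (∏ i ∈ Sᶜ, a i) * (∏ i ∈ S, c i) := by
      have : ∏ i, b i = ∏ i ∈ Finset.univ, (a i + d i) := rfl
      rw [this, Finset.prod_add, Finset.sum_eq_single Sᶜ]
      · have h1 : Finset.univ \ Sᶜ = S := by ext i; simp
        rw [h1, hdS S le_rfl]
      · intro T _ hTne
        set U := Finset.univ \ T with hU
        have hTU : T = Uᶜ := by ext i; simp [hU]
        by_cases hUS : U ⊆ S
        · rcases U.eq_empty_or_nonempty with hUe | hUne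
          · have hT : T = Finset.univ := by
              rw [hTU, hUe]; ext i; simp
            rw [hT, hprod, zero_mul]
          · have hUSlt : U ⊂ S := by
              refine hUS.ssubset_of_ne fun h => hTne ?_
              rw [hTU, h]
            have h1 : 1 ≤ U.card := hUne.card_pos
            have h2 : U.card < s := hS ▸ Finset.card_lt_card hUSlt
            have := IH U.card h2 h1 (le_trans (Nat.le_of_lt_succ (Nat.lt_succ_of_lt h2)) hst) U rfl c
              (fun i hi => hc i (hUS hi))
            rw [hTU, hdS U hUS, this]
        · rw [hdout U hUS, mul_zero]
      · intro h
        exact absurd (Finset.mem_powerset.mpr (Finset.subset_univ _)) h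
    have hne : ∏ i, b i ≠ 0 := hPB ▸ hx
    have hmem : ∏ i, b i ∈ Q := hPB ▸ Q.mul_mem_left _ (hcQ S le_rfl hSne)
    obtain ⟨k, hk⟩ := hQ.2 b hne hmem
    set E := Finset.univ.erase k with hE
    have hEB : ∏ i ∈ E, b i =
        ∏ i ∈ E, a i + ∑ T ∈ E.powerset.erase E, (∏ i ∈ T, a i) * ∏ i ∈ E \ T, d i := by
      have : ∏ i ∈ E, b i = ∏ i ∈ E, (a i + d i) := rfl
      rw [this, Finset.prod_add,
        ← Finset.add_sum_erase _ _ (Finset.mem_powerset.mpr (le_refl E))]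
      congr 1
      rw [Finset.sdiff_self, Finset.prod_empty, mul_one]
    have hsumδ : ∑ T ∈ E.powerset.erase E, (∏ i ∈ T, a i) * ∏ i ∈ E \ T, d i ∈ δ Q := by
      refine Ideal.sum_mem _ fun T hT => ?_
      obtain ⟨hTne, hTp⟩ := Finset.mem_erase.mp hT
      have hTE : T ⊆ E := Finset.mem_powerset.mp hTp
      set U := E \ T with hU
      have hUne : U.Nonempty := by
        rw [hU, Finset.sdiff_nonempty]
        exact fun h => hTne (le_antisymm hTE h)
      by_cases hUS : U ⊆ S
      · rw [hdS U hUS]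
        exact hδ.1 Q (Q.mul_mem_left _ (hcQ U hUS hUne))
      · rw [hdout U hUS, mul_zero]
        exact (δ Q).zero_mem
    have : ∏ i ∈ E, a i ∈ δ Q := by
      have := (δ Q).sub_mem hk hsumδ
      rwa [hEB, add_sub_cancel_right] at this
    exact hnot k this
end

section
/- Let R be a commutative ring, δ an expansion function on R, t a positive integer, and Q a weakly t-absorbing δ-semiprimary ideal of R that is not a t-absorbing δ-semiprimary ideal. Then Q^{t+1} = 0, i.e. q₁q₂⋯q_{t+1} = 0 for all q₁, …, q_{t+1} ∈ Q. -/
theorem pow_succ_eq_zero_of_weaklyTAbs_not_TAbs {R : Type*} [CommRing R]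
    (δ : Ideal R → Ideal R) (hδ : IdealExpansion δ) (t : ℕ) (ht : 0 < t)
    (Q : Ideal R) (hQ : IsWeaklyTAbsorbingDeltaSemiprimary δ t Q)
    (hn : ¬ IsTAbsorbingDeltaSemiprimary δ t Q) :
    ∀ q : Fin (t + 1) → R, (∀ i, q i ∈ Q) → (∏ i, q i) = 0 := by
  obtain ⟨hQtop, hW⟩ := hQ
  have hδQ : Q ≤ δ Q := hδ.1 Q
  have hn' : ∃ a : Fin (t + 1) → R, (∏ i, a i) ∈ Q ∧
      ∀ j : Fin (t + 1), (∏ i ∈ Finset.univ.erase j, a i) ∉ δ Q := by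
    by_contra h
    push_neg at h
    exact hn ⟨hQtop, fun a ha => h a ha⟩
  obtain ⟨a, haQ, haj⟩ := hn'
  have ha0 : (∏ i, a i) = 0 := by
    by_contra h0
    obtain ⟨j, hj⟩ := hW a h0 haQ
    exact haj j hj
  have key : ∀ n : ℕ, ∀ S : Finset (Fin (t + 1)), S.card = n →
      ∀ q : Fin (t + 1) → R, (∀ i ∈ S, q i ∈ Q) →
      (∏ i ∈ Sᶜ, a i) * ∏ i ∈ S, q i = 0 := by
    intro n
    induction n using Nat.strong_induction_on with
    | _ n IH =>
      intro S hcard q hq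
      by_contra hP
      rcases S.eq_empty_or_nonempty with rfl | ⟨i0, hi0⟩
      · apply hP
        simp [Finset.compl_empty, ha0]
      set c : Fin (t + 1) → R := fun i => if i ∈ S then q i else 0 with hc
      -- every term with T ⊆ some set, T ⊆ S strictly, vanishes
      have hsmall : ∀ T : Finset (Fin (t + 1)), T ⊆ S → T ≠ S →
          (∏ i ∈ T, c i) * ∏ i ∈ Finset.univ \ T, a i = 0 := by
        intro T hTS hTne
        have hcq : ∏ i ∈ T, c i = ∏ i ∈ T, q i :=
          Finset.prod_congr rfl fun i hi => by simp [hc, hTS hi]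
        have hlt : T.card < n := by
          rw [← hcard]
          exact Finset.card_lt_card (lt_of_le_of_ne hTS hTne)
        have := IH T.card hlt T rfl q fun i hi => hq i (hTS hi)
        rw [hcq, mul_comm, ← Finset.compl_eq_univ_sdiff]
        exact this
      have hzero : ∀ T : Finset (Fin (t + 1)), ¬ T ⊆ S → (∏ i ∈ T, c i) = 0 := by
        intro T hT
        obtain ⟨i, hiT, hiS⟩ := Finset.not_subset.mp hT
        exact Finset.prod_eq_zero hiT (by simp [hc, hiS])
      have hexp : ∏ i, (c i + a i) = (∏ i ∈ Sᶜ, a i) * ∏ i ∈ S, q i := by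
        rw [Finset.prod_add]
        rw [Finset.sum_eq_single S]
        · rw [← Finset.compl_eq_univ_sdiff, mul_comm]
          congr 1
          exact Finset.prod_congr rfl fun i hi => by simp [hc, hi]
        · intro T _ hTne
          by_cases hTS : T ⊆ S
          · exact hsmall T hTS hTne
          · rw [hzero T hTS, zero_mul]
        · intro hS
          exact absurd (Finset.mem_powerset.mpr (Finset.subset_univ S)) hS
      have hne : (∏ i, (c i + a i)) ≠ 0 := by rw [hexp]; exact hP
      have hmemQ : (∏ i, (c i + a i)) ∈ Q := by
        rw [hexp]
        refine Ideal.mul_mem_left _ _ ?_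
        rw [← Finset.mul_prod_erase S q hi0]
        exact Ideal.mul_mem_right _ _ (hq i0 hi0)
      obtain ⟨j, hj⟩ := hW _ hne hmemQ
      apply haj j
      have hexp2 : ∏ i ∈ Finset.univ.erase j, (c i + a i)
          = ∑ T ∈ (Finset.univ.erase j).powerset,
              (∏ i ∈ T, c i) * ∏ i ∈ Finset.univ.erase j \ T, a i :=
        Finset.prod_add _ _ _
      have hrest : ∑ T ∈ ((Finset.univ.erase j).powerset).erase ∅,
          (∏ i ∈ T, c i) * ∏ i ∈ Finset.univ.erase j \ T, a i ∈ δ Q := by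
        refine Ideal.sum_mem _ fun T hT => ?_
        obtain ⟨hTne, _⟩ := Finset.mem_erase.mp hT
        by_cases hTS : T ⊆ S
        · obtain ⟨i1, hi1⟩ := Finset.nonempty_of_ne_empty hTne
          have hcQ : ∏ i ∈ T, c i ∈ δ Q := by
            rw [← Finset.mul_prod_erase T c hi1]
            refine Ideal.mul_mem_right _ _ ?_
            have : c i1 = q i1 := by simp [hc, hTS hi1]
            rw [this]
            exact hδQ (hq i1 (hTS hi1))
          exact Ideal.mul_mem_right _ _ hcQ
        · rw [hzero T hTS, zero_mul]
          exact Ideal.zero_mem _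
      have hsplit : ∏ i ∈ Finset.univ.erase j, (c i + a i)
          = ∏ i ∈ Finset.univ.erase j, a i
            + ∑ T ∈ ((Finset.univ.erase j).powerset).erase ∅,
                (∏ i ∈ T, c i) * ∏ i ∈ Finset.univ.erase j \ T, a i := by
        rw [hexp2, ← Finset.add_sum_erase _ _ (Finset.mem_powerset.mpr (Finset.empty_subset _))]
        simp
      have : ∏ i ∈ Finset.univ.erase j, a i
          = ∏ i ∈ Finset.univ.erase j, (c i + a i)
            - ∑ T ∈ ((Finset.univ.erase j).powerset).erase ∅,
                (∏ i ∈ T, c i) * ∏ i ∈ Finset.univ.erase j \ T, a i := by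
        rw [hsplit]; ring
      rw [this]
      exact Ideal.sub_mem _ hj hrest
  intro q hq
  have := key Finset.univ.card Finset.univ rfl q fun i _ => hq i
  simpa using this
end

section
/- Let R be a commutative ring, δ an expansion function on R, t a positive integer, and Q a weakly t-absorbing δ-semiprimary ideal of R that is not a t-absorbing δ-semiprimary ideal. Then Q is contained in the nilradical of R, i.e. every element of Q is nilpotent. -/
theorem le_nilradical_of_weaklyTAbs_not_TAbs {R : Type*} [CommRing R]
    (δ : Ideal R → Ideal R) (hδ : IdealExpansion δ) (t : ℕ) (ht : 0 < t)
    (Q : Ideal R) (hQ : IsWeaklyTAbsorbingDeltaSemiprimary δ t Q)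
    (hn : ¬ IsTAbsorbingDeltaSemiprimary δ t Q) :
    Q ≤ nilradical R := by
  obtain ⟨hQtop, hw⟩ := hQ
  have hn' : ¬ ∀ a : Fin (t + 1) → R, (∏ i, a i) ∈ Q →
      ∃ j : Fin (t + 1), (∏ i ∈ Finset.univ.erase j, a i) ∈ δ Q :=
    fun h => hn ⟨hQtop, h⟩
  push_neg at hn'
  obtain ⟨a, haQ, ha⟩ := hn'
  have ha0 : (∏ i, a i) = 0 := by
    by_contra h
    obtain ⟨j, hj⟩ := hw a h haQ
    exact ha j hj
  intro q hq
  have key : ∀ m : ℕ, ∀ S : Finset (Fin (t + 1)), t + 1 - S.card ≤ m →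
      (∏ i ∈ S, a i) * q ^ (t + 1 - S.card) = 0 := by
    intro m
    induction m with
    | zero =>
      intro S hS
      have hcard : S.card = t + 1 := by
        have h1 : S.card ≤ t + 1 := by
          simpa using Finset.card_le_univ S
        omega
      have hSu : S = Finset.univ := Finset.eq_univ_of_card S (by simpa using hcard)
      rw [hSu]
      simp [ha0]
    | succ m ih =>
      intro S hS
      rcases le_or_gt (t + 1 - S.card) m with h | h
      · exact ih S h
      have hcard : t + 1 - S.card = m + 1 := le_antisymm hS h
      set g : Fin (t + 1) → R := fun i => if i ∈ S then 0 else q with hg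
      have hgmem : ∀ i, g i ∈ δ Q := by
        intro i
        simp only [hg]
        split
        · exact (δ Q).zero_mem
        · exact hδ.1 Q hq
      have hprod : (∏ i, (a i + g i)) = (∏ i ∈ S, a i) * q ^ (m + 1) := by
        rw [Finset.prod_add]
        rw [Finset.sum_eq_single S]
        · have hcompl : ∀ i ∈ Finset.univ \ S, g i = q := by
            intro i hi
            simp only [Finset.mem_sdiff] at hi
            simp [hg, hi.2]
          rw [Finset.prod_congr rfl hcompl, Finset.prod_const,
            Finset.card_sdiff_of_subset (Finset.subset_univ S)]
          simp [hcard.symm]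
        · intro T hT hTS
          by_cases hST : S ⊆ T
          · have hTcard : S.card < T.card :=
              Finset.card_lt_card (lt_of_le_of_ne hST (fun h => hTS h.symm))
            have hc : ∀ i ∈ Finset.univ \ T, g i = q := by
              intro i hi
              simp only [Finset.mem_sdiff] at hi
              have hiS : i ∉ S := fun h => hi.2 (hST h)
              simp [hg, hiS]
            rw [Finset.prod_congr rfl hc, Finset.prod_const,
              Finset.card_sdiff_of_subset (Finset.subset_univ T)]
            have := ih T (by simp; omega)
            simpa using this
          · obtain ⟨i, hiS, hiT⟩ := Finset.not_subset.mp hST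
            have : g i = 0 := by simp [hg, hiS]
            rw [Finset.prod_eq_zero (Finset.mem_sdiff.mpr ⟨Finset.mem_univ i, hiT⟩) this,
              mul_zero]
        · intro h
          exact absurd (Finset.mem_powerset.mpr (Finset.subset_univ S)) h
      by_cases h0 : (∏ i ∈ S, a i) * q ^ (m + 1) = 0
      · rw [hcard]; exact h0
      · exfalso
        have hne : (∏ i, (a i + g i)) ≠ 0 := by rw [hprod]; exact h0
        have hmem : (∏ i, (a i + g i)) ∈ Q := by
          rw [hprod]
          exact Ideal.mul_mem_left Q _ (Ideal.pow_mem_of_mem Q hq (m + 1) (Nat.succ_pos m))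
        obtain ⟨k, hk⟩ := hw _ hne hmem
        have hk' : (∏ i ∈ Finset.univ.erase k, a i) ∈ δ Q := by
          have h1 : Ideal.Quotient.mk (δ Q) (∏ i ∈ Finset.univ.erase k, (a i + g i))
              = Ideal.Quotient.mk (δ Q) (∏ i ∈ Finset.univ.erase k, a i) := by
            rw [map_prod, map_prod]
            refine Finset.prod_congr rfl fun i _ => ?_
            rw [map_add, Ideal.Quotient.eq_zero_iff_mem.2 (hgmem i), add_zero]
          rw [← Ideal.Quotient.eq_zero_iff_mem, ← h1, Ideal.Quotient.eq_zero_iff_mem]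
          exact hk
        exact ha k hk'
  have hfin := key (t + 1) ∅ (by simp)
  simp only [Finset.prod_empty, Finset.card_empty, Nat.sub_zero, one_mul] at hfin
  exact ⟨t + 1, hfin⟩
end

section
/- Let R₁ and R₂ be commutative rings, f : R₁ → R₂ a ring homomorphism, δ an expansion function on R₁, and δ' an expansion function on R₂ such that δ(f⁻¹(I)) = f⁻¹(δ'(I)) for every ideal I of R₂ (where f⁻¹(I) denotes the preimage/contraction of I along f). Let t be a positive integer. If Q₂ is a t-absorbing δ'-semiprimary ideal of R₂, then f⁻¹(Q₂) is a t-absorbing δ-semiprimary ideal of R₁. -/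
theorem comap_isTAbsorbingDeltaSemiprimary {R₁ R₂ : Type*} [CommRing R₁] [CommRing R₂]
    (f : R₁ →+* R₂) (δ : Ideal R₁ → Ideal R₁) (δ' : Ideal R₂ → Ideal R₂)
    (hδ : IdealExpansion δ) (hδ' : IdealExpansion δ')
    (hcomm : ∀ I : Ideal R₂, δ (I.comap f) = (δ' I).comap f)
    (t : ℕ) (ht : 0 < t) (Q₂ : Ideal R₂)
    (hQ : IsTAbsorbingDeltaSemiprimary δ' t Q₂) :
    IsTAbsorbingDeltaSemiprimary δ t (Q₂.comap f) := by
  obtain ⟨hne, habs⟩ := hQ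
  constructor
  · intro h
    have : (1:R₂) ∈ Q₂ := by
      have : (1:R₁) ∈ Q₂.comap f := h ▸ Submodule.mem_top
      simpa using this
    exact hne ((Ideal.eq_top_iff_one Q₂).mpr this)
  · intro a ha
    have h2 : (∏ i, f (a i)) ∈ Q₂ := by
      rw [← map_prod]; exact ha
    obtain ⟨j, hj⟩ := habs (fun i => f (a i)) h2
    refine ⟨j, ?_⟩
    rw [hcomm]
    simpa [Ideal.mem_comap, map_prod] using hj
end
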